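/- arXiv:2104.09198 — 4 statements merged into one kernel-verified Lean document; each statement's English description precedes it below -/
import Mathlib

section
/- Let φ* : [0,∞) → [0,∞) be a convex increasing function with φ*(0)=0, arising as the Young conjugate φ*(t) = sup_{s≥0}(st − φ(s)) of φ(s) = ω(e^s), where ω satisfies ω(e·t) ≤ L(ω(t)+1) for all t ≥ 0 with some L ≥ 1. Then for every y ≥ 0, λ > 0 and n ∈ ℕ: λL^n·φ*(y/(λL^n)) + n·y ≤ λ·φ*(y/λ) + λ·(L + L² + ⋯ + L^n). -/
/-!
Shifting `s ↦ s + 1` in the supremum defining `φ*(t)` and using `φ(s + 1) ≤ L (φ(s) + 1)` gives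
the one-step rescaling inequality `L φ*(t/L) + t ≤ φ*(t) + L`. Applying it at `t = y/(λLⁿ)`,
multiplying by `λLⁿ` and summing the resulting telescoping inequalities over `n` yields the claim.
-/

lemma mul_conj_div_add_le_of_shift_le {f g : ℝ → ℝ} {L : ℝ} (hL : 0 < L)
    (hshift : ∀ s, 0 ≤ s → f (s + 1) ≤ L * (f s + 1))
    (hg : ∀ t, 0 ≤ t → IsLUB {y | ∃ s, 0 ≤ s ∧ y = s * t - f s} (g t))
    {t : ℝ} (ht : 0 ≤ t) : L * g (t / L) + t ≤ g t + L := by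
  have hbound : g (t / L) ≤ (g t + L - t) / L := by
    refine (hg _ (div_nonneg ht hL.le)).2 ?_
    rintro _ ⟨s, hs, rfl⟩
    have hshifted : (s + 1) * t - f (s + 1) ≤ g t := (hg t ht).1 ⟨s + 1, by linarith, rfl⟩
    have hst : s * (t / L) * L = s * t := by field_simp
    rw [le_div_iff₀ hL, sub_mul, hst]
    nlinarith [hshift s hs]
  rw [le_div_iff₀ hL] at hbound
  linarith

lemma mul_pow_mul_div_add_le_of_rescaling {g : ℝ → ℝ} {L : ℝ} (hL : 0 < L)
    (hstep : ∀ t, 0 ≤ t → L * g (t / L) + t ≤ g t + L)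
    {y lam : ℝ} (hy : 0 ≤ y) (hlam : 0 < lam) (n : ℕ) :
    lam * L ^ n * g (y / (lam * L ^ n)) + n * y ≤
      lam * g (y / lam) + lam * ∑ j ∈ Finset.Icc 1 n, L ^ j := by
  induction n with
  | zero => simp
  | succ n ih =>
    have hμ : 0 < lam * L ^ n := mul_pos hlam (pow_pos hL n)
    have hscaled := mul_le_mul_of_nonneg_left
      (hstep (y / (lam * L ^ n)) (div_nonneg hy hμ.le)) hμ.le
    have hμy : lam * L ^ n * (y / (lam * L ^ n)) = y := by field_simp
    have hpow : lam * L ^ (n + 1) = lam * L ^ n * L := by ring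
    rw [hpow, ← div_div, Finset.sum_Icc_succ_top (Nat.le_add_left 1 n)]
    push_cast
    nlinarith

theorem stmt3_general (ω : ℝ → ℝ) (L : ℝ) (hL : 1 ≤ L)
    (hα : ∀ t, 0 ≤ t → ω (Real.exp 1 * t) ≤ L * (ω t + 1))
    (φstar : ℝ → ℝ)
    (hφstar : ∀ t, 0 ≤ t → IsLUB {y | ∃ s, 0 ≤ s ∧ y = s * t - ω (Real.exp s)} (φstar t)) :
    ∀ y lam : ℝ, 0 ≤ y → 0 < lam → ∀ n : ℕ,
      lam * L ^ n * φstar (y / (lam * L ^ n)) + n * y ≤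
        lam * φstar (y / lam) + lam * ∑ j ∈ Finset.Icc 1 n, L ^ j := by
  have hLpos : 0 < L := zero_lt_one.trans_le hL
  have hshift : ∀ s, 0 ≤ s → ω (Real.exp (s + 1)) ≤ L * (ω (Real.exp s) + 1) := fun s _ => by
    rw [Real.exp_add, mul_comm]
    exact hα _ (Real.exp_nonneg s)
  intro y lam hy hlam n
  exact mul_pow_mul_div_add_le_of_rescaling hLpos
    (fun t ht => mul_conj_div_add_le_of_shift_le hLpos hshift hφstar ht) hy hlam n

/-- `λL^n φ*(y/(λL^n)) + ny ≤ λφ*(y/λ) + λ(L + L² + ⋯ + L^n)` for the Young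
conjugate `φ*` of `φ(s) = ω(eˢ)`, where `ω(e·t) ≤ L(ω(t)+1)`. -/
theorem stmt3 (ω : ℝ → ℝ) (L : ℝ) (hL : 1 ≤ L)
    (hcont : Continuous ω) (hmono : Monotone ω) (hnonneg : ∀ t, 0 ≤ t → 0 ≤ ω t)
    (hα : ∀ t, 0 ≤ t → ω (Real.exp 1 * t) ≤ L * (ω t + 1))
    (hφconv : ConvexOn ℝ Set.univ fun s => ω (Real.exp s))
    (φstar : ℝ → ℝ)
    (hφstar : ∀ t, 0 ≤ t → IsLUB {y | ∃ s, 0 ≤ s ∧ y = s * t - ω (Real.exp s)} (φstar t))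
    (hconv : ConvexOn ℝ (Set.Ici 0) φstar) (hincr : MonotoneOn φstar (Set.Ici 0))
    (h0 : φstar 0 = 0) :
    ∀ y lam : ℝ, 0 ≤ y → 0 < lam → ∀ n : ℕ,
      lam * L ^ n * φstar (y / (lam * L ^ n)) + n * y ≤
        lam * φstar (y / lam) + lam * ∑ j ∈ Finset.Icc 1 n, L ^ j :=
  stmt3_general ω L hL hα φstar hφstar
end

section
/- If a weight function ω satisfies ω(t) = o(t^a) as t → ∞ for some 0 < a ≤ 1, then for every B > 0 and λ > 0 there exists C > 0 such that B^n · n! ≤ C · exp(a·λ·φ*(n/λ)) for all n ∈ ℕ₀, where φ* is the Young conjugate of φ(s) = ω(e^s). -/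
/-! Choose `s = log t` with `t ^ a = 2Bn` in the supremum defining `φ*(n/λ)`. Then
`aλ (s n/λ - ω(eˢ)) = n log(2Bn) - aλ ω(t)`, and since `ω(t) = o(t ^ a) = o(n)` the error
`aλ ω(t)` is eventually below `n log 2`. Hence `exp(aλ φ*(n/λ)) ≥ (Bn)ⁿ ≥ Bⁿ n!` for all large
`n`, and the finitely many remaining `n` are absorbed into the constant. -/

open Filter Real Asymptotics

lemma eventually_le_mul_rpow_of_isLittleO {f : ℝ → ℝ} {a ε : ℝ}
    (hf : f =o[atTop] fun t => t ^ a) (hε : 0 < ε) :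
    ∀ᶠ t in atTop, f t ≤ ε * t ^ a := by
  filter_upwards [hf.def hε, eventually_ge_atTop 0] with t hft ht
  rw [norm_of_nonneg (rpow_nonneg ht a)] at hft
  exact (le_abs_self _).trans hft

lemma eventually_pow_mul_factorial_le_exp {ω φstar : ℝ → ℝ} {a lam B : ℝ}
    (ha : 0 < a) (hlam : 0 < lam) (hB : 0 < B) (hω : ω =o[atTop] fun t => t ^ a)
    (hφstar : ∀ t ≥ 0, ∀ s ≥ 0, s * t - ω (exp s) ≤ φstar t) :
    ∀ᶠ n : ℕ in atTop, B ^ n * (n.factorial : ℝ) ≤ exp (a * lam * φstar (n / lam)) := by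
  set ε := log 2 / (2 * B * (a * lam))
  have hε : 0 < ε := div_pos (log_pos one_lt_two) (by positivity)
  have hroot : Tendsto (fun n : ℕ => (2 * B * n) ^ a⁻¹) atTop atTop :=
    (tendsto_rpow_atTop (inv_pos.2 ha)).comp
      (tendsto_natCast_atTop_atTop.const_mul_atTop (by positivity))
  filter_upwards [hroot.eventually (eventually_le_mul_rpow_of_isLittleO hω hε),
    hroot.eventually (eventually_ge_atTop 1), eventually_gt_atTop 0] with n hωt ht1 hn
  set t := (2 * B * n) ^ a⁻¹
  have hBn : 0 < B * n := by positivity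
  have hta : t ^ a = 2 * B * n := rpow_inv_rpow (by positivity) ha.ne'
  have hlog_t : a * log t = log 2 + log (B * n) := by
    rw [← log_rpow (by linarith), hta, mul_assoc, log_mul two_ne_zero hBn.ne']
  have hkey : n * log (B * n) ≤ a * lam * φstar (n / lam) :=
    calc n * log (B * n) = a * lam * (log t * (n / lam) - ε * t ^ a) := by
          have hε_eq : a * lam * ε * (2 * B) = log 2 := by simp only [ε]; field_simp
          have hlam_cancel : a * lam * (log t * (n / lam)) = n * (a * log t) := by field_simp
          rw [hta]; linear_combination -(n : ℝ) * hlog_t - hlam_cancel + n * hε_eq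
      _ ≤ a * lam * (log t * (n / lam) - ω (exp (log t))) := by
          rw [exp_log (by linarith)]; gcongr
      _ ≤ a * lam * φstar (n / lam) :=
          mul_le_mul_of_nonneg_left (hφstar _ (by positivity) _ (log_nonneg ht1)) (by positivity)
  calc B ^ n * (n.factorial : ℝ) ≤ B ^ n * (n : ℝ) ^ n := by
        gcongr; exact_mod_cast n.factorial_le_pow
    _ = exp (n * log (B * n)) := by rw [← log_pow, exp_log (pow_pos hBn n), mul_pow]
    _ ≤ exp (a * lam * φstar (n / lam)) := exp_le_exp.2 hkey

theorem stmt4_general (ω : ℝ → ℝ) (a : ℝ) (ha0 : 0 < a)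
    (hlittleo : ω =o[atTop] fun t : ℝ => t ^ a)
    (φstar : ℝ → ℝ)
    (hφstar : ∀ t, 0 ≤ t → IsLUB {y | ∃ s, 0 ≤ s ∧ y = s * t - ω (Real.exp s)} (φstar t)) :
    ∀ B lam : ℝ, 0 < B → 0 < lam → ∃ C > 0, ∀ n : ℕ,
      B ^ n * (n.factorial : ℝ) ≤ C * Real.exp (a * lam * φstar ((n : ℝ) / lam)) := by
  intro B lam hB hlam
  have hlarge := eventually_pow_mul_factorial_le_exp ha0 hlam hB hlittleo
    fun t ht s hs => (hφstar t ht).1 ⟨s, hs, rfl⟩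
  have hbigO : (fun n : ℕ => B ^ n * (n.factorial : ℝ)) =O[atTop]
      fun n : ℕ => exp (a * lam * φstar (n / lam)) :=
    IsBigO.of_bound' <| hlarge.mono fun n hn => by
      rwa [norm_of_nonneg (by positivity), norm_of_nonneg (exp_pos _).le]
  obtain ⟨C, hC, hbound⟩ := bound_of_isBigO_nat_atTop hbigO
  refine ⟨C, hC, fun n => ?_⟩
  simpa only [norm_of_nonneg (by positivity : (0 : ℝ) ≤ B ^ n * n.factorial),
    norm_of_nonneg (exp_pos _).le] using hbound (x := n) (exp_pos _).ne'

/-- if `ω(t) = o(t^a)` at infinity for some `0 < a ≤ 1`, then for every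
`B, λ > 0` there is `C > 0` with `Bⁿ n! ≤ C exp(aλφ*(n/λ))` for all `n ∈ ℕ₀`,
`φ*` being the Young conjugate of `s ↦ ω(eˢ)`. -/
theorem stmt4 (ω : ℝ → ℝ) (a : ℝ) (ha0 : 0 < a) (ha1 : a ≤ 1)
    (hcont : Continuous ω) (hmono : Monotone ω) (hnonneg : ∀ t, 0 ≤ t → 0 ≤ ω t)
    (hφconv : ConvexOn ℝ Set.univ fun s => ω (Real.exp s))
    (hlog : (fun t => Real.log t) =o[atTop] ω)
    (hlittleo : ω =o[atTop] fun t : ℝ => t ^ a)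
    (φstar : ℝ → ℝ)
    (hφstar : ∀ t, 0 ≤ t → IsLUB {y | ∃ s, 0 ≤ s ∧ y = s * t - ω (Real.exp s)} (φstar t)) :
    ∀ B lam : ℝ, 0 < B → 0 < lam → ∃ C > 0, ∀ n : ℕ,
      B ^ n * (n.factorial : ℝ) ≤ C * Real.exp (a * lam * φstar ((n : ℝ) / lam)) :=
  stmt4_general ω a ha0 hlittleo φstar hφstar
end

section
/- Let ω be a weight function satisfying ω(2t) ≤ L(ω(t)+1) for all t ≥ 0 with L ≥ 1, extended radially to vectors. Let τ ∈ ℝ and let k ∈ ℕ₀ be minimal with |τ| + |1−τ| ≤ 2^k. Then for all x, y ∈ ℝ^d: ω((x,y)) ≤ L²·ω((1−τ)x + τy) + L^{k+2}·ω(y−x) + (L + L² + ⋯ + L^{k+2}). -/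
/-!
Write `a = (1-τ)x + τy` and `b = y - x`, so that `x = a - τb` and `y = a + (1-τ)b`. Then
`|(x,y)| ≤ |x| + |y| ≤ 2|a| + (|τ|+|1-τ|)|b| ≤ 2|a| + 2^k|b|`. One doubling step splits `ω` of a
sum of two nonnegative numbers into `ω` of each summand; one more step removes the factor `2` from
`2|a|` and `k` more remove `2^k` from `2^k|b|`.
-/

open Finset

lemma sum_Icc_one_pow_succ {R : Type*} [CommSemiring R] (L : R) (j : ℕ) :
    ∑ i ∈ Icc 1 (j + 1), L ^ i = L * ∑ i ∈ Icc 1 j, L ^ i + L := by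
  induction j with
  | zero => simp
  | succ j ih =>
    conv_rhs => rw [sum_Icc_succ_top (by omega : 1 ≤ j + 1)]
    rw [sum_Icc_succ_top (by omega : 1 ≤ j + 2), ih]
    ring

section Doubling

variable {ω : ℝ → ℝ} {L : ℝ}

lemma apply_two_pow_mul_le (hL : 0 ≤ L) (hα : ∀ t, 0 ≤ t → ω (2 * t) ≤ L * (ω t + 1))
    (j : ℕ) {t : ℝ} (ht : 0 ≤ t) :
    ω (2 ^ j * t) ≤ L ^ j * ω t + ∑ i ∈ Icc 1 j, L ^ i := by
  induction j with
  | zero => simp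
  | succ j ih =>
    calc ω (2 ^ (j + 1) * t) = ω (2 * (2 ^ j * t)) := by ring_nf
      _ ≤ L * (ω (2 ^ j * t) + 1) := hα _ (by positivity)
      _ ≤ L * (L ^ j * ω t + ∑ i ∈ Icc 1 j, L ^ i + 1) := by gcongr
      _ = L ^ (j + 1) * ω t + ∑ i ∈ Icc 1 (j + 1), L ^ i := by
        rw [sum_Icc_one_pow_succ]; ring

lemma apply_add_le (hL : 0 ≤ L) (hmono : Monotone ω) (hnonneg : ∀ t, 0 ≤ t → 0 ≤ ω t)
    (hα : ∀ t, 0 ≤ t → ω (2 * t) ≤ L * (ω t + 1)) {s t : ℝ} (hs : 0 ≤ s) (ht : 0 ≤ t) :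
    ω (s + t) ≤ L * (ω s + ω t + 1) := by
  have hmax : ω (max s t) ≤ ω s + ω t := by
    rcases le_total s t with h | h
    · simpa [max_eq_right h] using hnonneg s hs
    · simpa [max_eq_left h] using hnonneg t ht
  calc ω (s + t) ≤ ω (2 * max s t) := hmono (by linarith [le_max_left s t, le_max_right s t])
    _ ≤ L * (ω (max s t) + 1) := hα _ (le_max_of_le_left hs)
    _ ≤ L * (ω s + ω t + 1) := by gcongr

end Doubling

lemma norm_add_norm_le_of_affine {E : Type*} [SeminormedAddCommGroup E] [NormedSpace ℝ E]
    (τ : ℝ) (x y : E) :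
    ‖x‖ + ‖y‖ ≤ 2 * ‖(1 - τ) • x + τ • y‖ + (|τ| + |1 - τ|) * ‖y - x‖ := by
  have hx : x = ((1 - τ) • x + τ • y) - τ • (y - x) := by module
  have hy : y = ((1 - τ) • x + τ • y) + (1 - τ) • (y - x) := by module
  have h₁ := norm_sub_le ((1 - τ) • x + τ • y) (τ • (y - x))
  have h₂ := norm_add_le ((1 - τ) • x + τ • y) ((1 - τ) • (y - x))
  rw [← hx, norm_smul, Real.norm_eq_abs] at h₁
  rw [← hy, norm_smul, Real.norm_eq_abs] at h₂
  linarith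

theorem stmt6_general (d : ℕ) (ω : ℝ → ℝ) (L : ℝ) (hL : 1 ≤ L)
    (hmono : Monotone ω) (hnonneg : ∀ t, 0 ≤ t → 0 ≤ ω t)
    (hα : ∀ t, 0 ≤ t → ω (2 * t) ≤ L * (ω t + 1))
    (τ : ℝ) (k : ℕ) (hk : |τ| + |1 - τ| ≤ 2 ^ k) :
    ∀ x y : EuclideanSpace ℝ (Fin d),
      ω (Real.sqrt (‖x‖ ^ 2 + ‖y‖ ^ 2)) ≤
        L ^ 2 * ω ‖(1 - τ) • x + τ • y‖ + L ^ (k + 2) * ω ‖y - x‖ +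
          ∑ j ∈ Finset.Icc 1 (k + 2), L ^ j := by
  intro x y
  set A := ‖(1 - τ) • x + τ • y‖
  set B := ‖y - x‖
  have hB : 0 ≤ B := norm_nonneg _
  have hsize : Real.sqrt (‖x‖ ^ 2 + ‖y‖ ^ 2) ≤ 2 * A + 2 ^ k * B :=
    calc Real.sqrt (‖x‖ ^ 2 + ‖y‖ ^ 2) ≤ ‖x‖ + ‖y‖ :=
          Real.sqrt_le_iff.2 ⟨by positivity, by nlinarith [norm_nonneg x, norm_nonneg y]⟩
      _ ≤ 2 * A + (|τ| + |1 - τ|) * B := norm_add_norm_le_of_affine τ x y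
      _ ≤ 2 * A + 2 ^ k * B := by gcongr
  have hωA := hα A (norm_nonneg _)
  have hL0 : 0 ≤ L := by linarith
  have hωB := apply_two_pow_mul_le hL0 hα k hB
  have hpow : L ^ (k + 1) ≤ L ^ (k + 2) := pow_le_pow_right₀ hL (by omega)
  have hsq : L ^ 2 ≤ L ^ (k + 2) := pow_le_pow_right₀ hL (by omega)
  have hωB0 := hnonneg B hB
  calc ω (Real.sqrt (‖x‖ ^ 2 + ‖y‖ ^ 2)) ≤ ω (2 * A + 2 ^ k * B) := hmono hsize
    _ ≤ L * (ω (2 * A) + ω (2 ^ k * B) + 1) :=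
      apply_add_le hL0 hmono hnonneg hα (by positivity) (by positivity)
    _ ≤ L * (L * (ω A + 1) + (L ^ k * ω B + ∑ i ∈ Icc 1 k, L ^ i) + 1) := by
      gcongr
    _ = L ^ 2 * ω A + L ^ (k + 1) * ω B + (∑ i ∈ Icc 1 (k + 1), L ^ i + L ^ 2) := by
      rw [sum_Icc_one_pow_succ]; ring
    _ ≤ L ^ 2 * ω A + L ^ (k + 2) * ω B + ∑ j ∈ Icc 1 (k + 2), L ^ j := by
      rw [sum_Icc_succ_top (by omega : 1 ≤ k + 2)]
      gcongr

/-- `ω((x,y)) ≤ L²ω((1−τ)x+τy) + L^{k+2}ω(y−x) + (L + ⋯ + L^{k+2})`,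
where `k` is minimal with `|τ|+|1−τ| ≤ 2^k`. -/
theorem stmt6 (d : ℕ) (ω : ℝ → ℝ) (L : ℝ) (hL : 1 ≤ L) (hcont : Continuous ω)
    (hmono : Monotone ω) (hnonneg : ∀ t, 0 ≤ t → 0 ≤ ω t)
    (hα : ∀ t, 0 ≤ t → ω (2 * t) ≤ L * (ω t + 1))
    (τ : ℝ) (k : ℕ) (hk : |τ| + |1 - τ| ≤ 2 ^ k)
    (hkmin : ∀ j : ℕ, |τ| + |1 - τ| ≤ 2 ^ j → k ≤ j) :
    ∀ x y : EuclideanSpace ℝ (Fin d),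
      ω (Real.sqrt (‖x‖ ^ 2 + ‖y‖ ^ 2)) ≤
        L ^ 2 * ω ‖(1 - τ) • x + τ • y‖ + L ^ (k + 2) * ω ‖y - x‖ +
          ∑ j ∈ Finset.Icc 1 (k + 2), L ^ j :=
  stmt6_general d ω L hL hmono hnonneg hα τ k hk
end

section
/- Let ω be a subadditive weight function (ω(s+t) ≤ ω(s)+ω(t)) with Young conjugate φ* of φ(s)=ω(e^s). Then for all λ > 0 and all j, k ∈ ℕ: (e^{λφ*(j/λ)}/j!)·(e^{λφ*(k/λ)}/k!) ≤ e^{λφ*((j+k)/λ)}/((j+k)!). -/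
/-!
Writing `a = eˢ`, the quantity `e^{λφ*(j/λ)}` is `sup_{a ≥ 1} aʲ e^{-λω(a)}`. For `a, b ≥ 1` the
binomial theorem gives `C(j+k, j) aʲ bᵏ ≤ (a + b)^{j+k}` and subadditivity gives
`ω(a + b) ≤ ω(a) + ω(b)`, so `C(j+k, j) e^{λφ*(j/λ)} e^{λφ*(k/λ)} ≤ e^{λφ*((j+k)/λ)}`;
dividing by `j! k! C(j+k, j) = (j+k)!` gives the claim.
-/

open Real
open scoped Nat

theorem choose_mul_pow_mul_pow_le_add_pow {R : Type*} [CommSemiring R] [PartialOrder R]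
    [IsOrderedRing R] {a b : R} (ha : 0 ≤ a) (hb : 0 ≤ b) (m n : ℕ) :
    ((m + n).choose m : R) * a ^ m * b ^ n ≤ (a + b) ^ (m + n) := by
  rw [add_pow]
  calc ((m + n).choose m : R) * a ^ m * b ^ n = a ^ m * b ^ (m + n - m) * (m + n).choose m := by
        rw [Nat.add_sub_cancel_left]; ring
    _ ≤ ∑ i ∈ Finset.range (m + n + 1), a ^ i * b ^ (m + n - i) * (m + n).choose i :=
        Finset.single_le_sum (f := fun i => a ^ i * b ^ (m + n - i) * ((m + n).choose i : R))
          (fun i _ => by positivity) (Finset.mem_range.2 (by omega))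

theorem log_choose_add_mul_add_mul_le (s t : ℝ) (m n : ℕ) :
    log ((m + n).choose m) + m * s + n * t ≤ (m + n) * log (exp s + exp t) := by
  have hchoose : (0 : ℝ) < (m + n).choose m := by exact_mod_cast Nat.choose_pos (by omega)
  have h := log_le_log (by positivity)
    (choose_mul_pow_mul_pow_le_add_pow (exp_pos s).le (exp_pos t).le m n)
  rwa [log_mul (by positivity) (by positivity), log_mul hchoose.ne' (by positivity), log_pow,
    log_pow, log_exp, log_exp, log_pow, Nat.cast_add] at h

theorem factorial_div_mul_factorial_div_le {A B D : ℝ} {m n : ℕ}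
    (h : A * B * (m + n).choose m ≤ D) : A / m ! * (B / n !) ≤ D / (m + n)! := by
  rw [div_mul_div_comm, div_le_div_iff₀ (by positivity) (by positivity),
    ← Nat.choose_mul_factorial_mul_factorial (Nat.le_add_right m n), Nat.add_sub_cancel_left]
  push_cast
  calc A * B * ((m + n).choose m * m ! * n !) = A * B * (m + n).choose m * (m ! * n !) := by ring
    _ ≤ D * (m ! * n !) := mul_le_mul_of_nonneg_right h (by positivity)

theorem mul_youngConj_add_add_log_choose_le {ω φstar : ℝ → ℝ}
    (hsub : ∀ s t, 0 ≤ s → 0 ≤ t → ω (s + t) ≤ ω s + ω t)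
    (hφstar : ∀ t, 0 ≤ t → IsLUB {y | ∃ s, 0 ≤ s ∧ y = s * t - ω (exp s)} (φstar t))
    {lam : ℝ} (hlam : 0 < lam) (j k : ℕ) :
    lam * φstar (j / lam) + lam * φstar (k / lam) + log ((j + k).choose j) ≤
      lam * φstar ((j + k) / lam) := by
  suffices h : φstar (j / lam) + φstar (k / lam) ≤
      φstar ((j + k) / lam) - log ((j + k).choose j) / lam by
    have := mul_le_mul_of_nonneg_left h hlam.le
    rw [mul_add, mul_sub, mul_div_cancel₀ _ hlam.ne'] at this
    linarith
  refine ((hφstar _ (by positivity)).add (hφstar _ (by positivity))).2 ?_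
  rintro _ ⟨_, ⟨s, hs, rfl⟩, _, ⟨t, ht, rfl⟩, rfl⟩
  have hst : 0 ≤ log (exp s + exp t) := log_nonneg (by linarith [one_le_exp hs, exp_pos t])
  have hsup := (hφstar ((j + k) / lam) (by positivity)).1 ⟨_, hst, rfl⟩
  have hω : ω (exp (log (exp s + exp t))) ≤ ω (exp s) + ω (exp t) := by
    rw [exp_log (by positivity)]
    exact hsub _ _ (exp_pos s).le (exp_pos t).le
  have hbin := div_le_div_of_nonneg_right (log_choose_add_mul_add_mul_le s t j k) hlam.le
  linear_combination hsup + hω + hbin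

theorem stmt12_general (ω : ℝ → ℝ)
    (hsub : ∀ s t, 0 ≤ s → 0 ≤ t → ω (s + t) ≤ ω s + ω t)
    (φstar : ℝ → ℝ)
    (hφstar : ∀ t, 0 ≤ t → IsLUB {y | ∃ s, 0 ≤ s ∧ y = s * t - ω (Real.exp s)} (φstar t)) :
    ∀ lam : ℝ, 0 < lam → ∀ j k : ℕ, 1 ≤ j → 1 ≤ k →
      Real.exp (lam * φstar ((j : ℝ) / lam)) / (j.factorial : ℝ) *
          (Real.exp (lam * φstar ((k : ℝ) / lam)) / (k.factorial : ℝ)) ≤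
        Real.exp (lam * φstar (((j : ℝ) + k) / lam)) / ((j + k).factorial : ℝ) := by
  intro lam hlam j k _ _
  apply factorial_div_mul_factorial_div_le
  have hchoose : (0 : ℝ) < (j + k).choose j := by exact_mod_cast Nat.choose_pos (by omega)
  rw [← exp_add, ← exp_log hchoose, ← exp_add, exp_le_exp]
  exact mul_youngConj_add_add_log_choose_le hsub hφstar hlam j k

/-- for a subadditive weight `ω` with Young conjugate `φ*` of `s ↦ ω(eˢ)`,
`(e^{λφ*(j/λ)}/j!)(e^{λφ*(k/λ)}/k!) ≤ e^{λφ*((j+k)/λ)}/(j+k)!` for all `λ>0`, `j,k ∈ ℕ`. -/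
theorem stmt12 (ω : ℝ → ℝ) (hcont : Continuous ω) (hmono : Monotone ω)
    (h0 : ω 0 = 0) (hnonneg : ∀ t, 0 ≤ t → 0 ≤ ω t)
    (hsub : ∀ s t, 0 ≤ s → 0 ≤ t → ω (s + t) ≤ ω s + ω t)
    (hφconv : ConvexOn ℝ Set.univ fun s => ω (Real.exp s))
    (hlog : (fun t => Real.log t) =o[Filter.atTop] ω)
    (φstar : ℝ → ℝ)
    (hφstar : ∀ t, 0 ≤ t → IsLUB {y | ∃ s, 0 ≤ s ∧ y = s * t - ω (Real.exp s)} (φstar t)) :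
    ∀ lam : ℝ, 0 < lam → ∀ j k : ℕ, 1 ≤ j → 1 ≤ k →
      Real.exp (lam * φstar ((j : ℝ) / lam)) / (j.factorial : ℝ) *
          (Real.exp (lam * φstar ((k : ℝ) / lam)) / (k.factorial : ℝ)) ≤
        Real.exp (lam * φstar (((j : ℝ) + k) / lam)) / ((j + k).factorial : ℝ) :=
  stmt12_general ω hsub φstar hφstar
end
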